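/- arXiv:2105.00284 — 2 statements merged into one kernel-verified Lean document; each statement's English description precedes it below -/
import Mathlib

section
/- Let (Ω_n, F_n, P_n) be probability spaces with filtrations (F_{n,j})_{j=0}^{N_n}, and let X_{n,j} be nonnegative F_{n,j}-measurable random variables for 1 ≤ j ≤ N_n. If the sums S_n = Σ_{j=1}^{N_n} E_n[X_{n,j} | F_{n,j-1}] converge to 0 in P_n-probability as n → ∞, then the sums Σ_{j=1}^{N_n} X_{n,j} also converge to 0 in P_n-probability. -/
/-!
Lenglart's domination argument. Write `A_k = ∑_{i ≤ k} E[X_i | F_{i-1}]` for the compensator and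
stop summing the `X_j` as soon as `A_j` exceeds `δ`. Since `{A_j ≤ δ}` is `F_{j-1}`-measurable,
the stopped sum has the same expectation as the stopped compensator, which is at most `δ`; Markov's
inequality then gives `P(∑ X_j ≥ ε) ≤ δ / ε + P(A_N ≥ δ)`, and letting first `n → ∞`, then
`δ → 0`, yields the claim.
-/

open MeasureTheory Filter Finset

open scoped ENNReal

theorem Finset.sum_Icc_ite_sum_Icc_le {c : ℕ → ℝ} (hc : ∀ i, 0 ≤ c i) {δ : ℝ} (hδ : 0 ≤ δ)
    (N : ℕ) : ∑ j ∈ Icc 1 N, (if ∑ i ∈ Icc 1 j, c i ≤ δ then c j else 0) ≤ δ := by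
  induction N with
  | zero => simpa using hδ
  | succ N ih =>
    rw [sum_Icc_succ_top (by omega)]
    by_cases hN : ∑ i ∈ Icc 1 (N + 1), c i ≤ δ
    · have h_all : ∀ j ∈ Icc 1 N, (if ∑ i ∈ Icc 1 j, c i ≤ δ then c j else 0) = c j := by
        intro j hj
        refine if_pos (le_trans (sum_le_sum_of_subset_of_nonneg ?_ fun i _ _ => hc i) hN)
        exact Icc_subset_Icc_right (by simp only [mem_Icc] at hj; omega)
      rwa [sum_congr rfl h_all, if_pos hN, ← sum_Icc_succ_top (by omega)]
    · simpa [if_neg hN] using ih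

section Compensator

variable {Ω : Type*} [mΩ : MeasurableSpace Ω] {μ : Measure Ω} {F : ℕ → MeasurableSpace Ω}
  {X : ℕ → Ω → ℝ}

noncomputable def compensator (μ : Measure Ω) (F : ℕ → MeasurableSpace Ω) (X : ℕ → Ω → ℝ)
    (k : ℕ) : Ω → ℝ :=
  fun ω => ∑ i ∈ Icc 1 k, μ[X i | F (i - 1)] ω

theorem stronglyMeasurable_compensator (hF_mono : Monotone F) (k : ℕ) :
    StronglyMeasurable[F (k - 1)] (compensator μ F X k) :=
  Finset.stronglyMeasurable_fun_sum _ fun i hi =>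
    stronglyMeasurable_condExp.mono (hF_mono (by simp only [mem_Icc] at hi; omega))

theorem ae_forall_condExp_nonneg (hX_nonneg : ∀ j ω, 0 ≤ X j ω) :
    ∀ᵐ ω ∂μ, ∀ j, 0 ≤ μ[X j | F (j - 1)] ω :=
  ae_all_iff.2 fun j => condExp_nonneg (Eventually.of_forall (hX_nonneg j))

theorem integral_sum_indicator_compensator_le [IsProbabilityMeasure μ] (hF_mono : Monotone F)
    (hF_le : ∀ j, F j ≤ mΩ) (hX_nonneg : ∀ j ω, 0 ≤ X j ω) {N : ℕ}
    (hX_int : ∀ j ∈ Icc 1 N, Integrable (X j) μ) {δ : ℝ} (hδ : 0 ≤ δ) :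
    ∫ ω, ∑ j ∈ Icc 1 N, {ω | compensator μ F X j ω ≤ δ}.indicator (X j) ω ∂μ ≤ δ := by
  set G : ℕ → Set Ω := fun j => {ω | compensator μ F X j ω ≤ δ}
  have hG : ∀ j, MeasurableSet[F (j - 1)] (G j) := fun j =>
    measurableSet_le (stronglyMeasurable_compensator hF_mono j).measurable measurable_const
  have hG' : ∀ j, MeasurableSet (G j) := fun j => hF_le _ _ (hG j)
  have h_int_condExp :
      Integrable (fun ω => ∑ j ∈ Icc 1 N, (G j).indicator (μ[X j | F (j - 1)]) ω) μ :=
    integrable_finsetSum _ fun j _ => integrable_condExp.indicator (hG' j)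
  calc ∫ ω, ∑ j ∈ Icc 1 N, (G j).indicator (X j) ω ∂μ
      = ∑ j ∈ Icc 1 N, ∫ ω in G j, X j ω ∂μ := by
        rw [integral_finsetSum _ fun j hj => (hX_int j hj).indicator (hG' j)]
        exact sum_congr rfl fun j _ => integral_indicator (hG' j)
    _ = ∑ j ∈ Icc 1 N, ∫ ω in G j, μ[X j | F (j - 1)] ω ∂μ :=
        sum_congr rfl fun j hj => (setIntegral_condExp (hF_le _) (hX_int j hj) (hG j)).symm
    _ = ∫ ω, ∑ j ∈ Icc 1 N, (G j).indicator (μ[X j | F (j - 1)]) ω ∂μ := by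
        rw [integral_finsetSum _ fun j _ => integrable_condExp.indicator (hG' j)]
        exact sum_congr rfl fun j _ => (integral_indicator (hG' j)).symm
    _ ≤ ∫ _, δ ∂μ := by
        refine integral_mono_ae h_int_condExp (integrable_const δ) ?_
        filter_upwards [ae_forall_condExp_nonneg hX_nonneg] with ω hω
        simpa only [Set.indicator_apply, G, Set.mem_ofPred_eq, compensator]
          using sum_Icc_ite_sum_Icc_le hω hδ N
    _ = δ := by simp

theorem measure_le_sum_le_ofReal_div_add [IsProbabilityMeasure μ] (hF_mono : Monotone F)
    (hF_le : ∀ j, F j ≤ mΩ) (hX_nonneg : ∀ j ω, 0 ≤ X j ω) {N : ℕ}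
    (hX_int : ∀ j ∈ Icc 1 N, Integrable (X j) μ) {ε δ : ℝ} (hε : 0 < ε) (hδ : 0 ≤ δ) :
    μ {ω | ε ≤ ∑ j ∈ Icc 1 N, X j ω}
      ≤ ENNReal.ofReal (δ / ε) + μ {ω | δ ≤ compensator μ F X N ω} := by
  set Y : Ω → ℝ := fun ω => ∑ j ∈ Icc 1 N, {ω | compensator μ F X j ω ≤ δ}.indicator (X j) ω
  have hY_int : Integrable Y μ := by
    refine integrable_finsetSum _ fun j hj => (hX_int j hj).indicator ?_
    exact hF_le _ _ (measurableSet_le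
      (stronglyMeasurable_compensator hF_mono j).measurable measurable_const)
  have hY_nonneg : 0 ≤ᵐ[μ] Y := Eventually.of_forall fun ω =>
    sum_nonneg fun j _ => Set.indicator_nonneg (fun ω _ => hX_nonneg j ω) ω
  have h_markov : μ {ω | ε ≤ Y ω} ≤ ENNReal.ofReal (δ / ε) := by
    rw [ENNReal.le_ofReal_iff_toReal_le (measure_ne_top _ _) (by positivity), le_div_iff₀ hε,
      mul_comm]
    exact (mul_meas_ge_le_integral_of_nonneg hY_nonneg hY_int ε).trans
      (integral_sum_indicator_compensator_le hF_mono hF_le hX_nonneg hX_int hδ)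
  -- Off `{A_N ≥ δ}` every `A_j` with `j ≤ N` is below `δ`, so nothing has been cut from the sum.
  have h_cover : {ω | ε ≤ ∑ j ∈ Icc 1 N, X j ω}
      ≤ᵐ[μ] ({ω | ε ≤ Y ω} ∪ {ω | δ ≤ compensator μ F X N ω} : Set Ω) := by
    filter_upwards [ae_forall_condExp_nonneg hX_nonneg] with ω hω hε_le
    by_cases hAN : δ ≤ compensator μ F X N ω
    · exact Or.inr hAN
    refine Or.inl (hε_le.trans_eq (sum_congr rfl fun j hj => (Set.indicator_of_mem ?_ _).symm))
    refine le_trans ?_ (not_le.1 hAN).le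
    exact sum_le_sum_of_subset_of_nonneg
      (Icc_subset_Icc_right (by simp only [mem_Icc] at hj; omega)) fun i _ _ => hω i
  calc μ {ω | ε ≤ ∑ j ∈ Icc 1 N, X j ω}
      ≤ μ ({ω | ε ≤ Y ω} ∪ {ω | δ ≤ compensator μ F X N ω}) := measure_mono_ae h_cover
    _ ≤ μ {ω | ε ≤ Y ω} + μ {ω | δ ≤ compensator μ F X N ω} := measure_union_le _ _
    _ ≤ ENNReal.ofReal (δ / ε) + μ {ω | δ ≤ compensator μ F X N ω} := by gcongr

end Compensator

theorem ENNReal.tendsto_nhds_zero_of_le_ofReal_add {ι : Type*} {l : Filter ι} {a : ι → ℝ≥0∞}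
    {b : ℝ → ι → ℝ≥0∞} (hb : ∀ δ > 0, Tendsto (b δ) l (nhds 0))
    (hab : ∀ δ > 0, ∀ i, a i ≤ ENNReal.ofReal δ + b δ i) : Tendsto a l (nhds 0) := by
  rw [ENNReal.tendsto_nhds_zero]
  intro η hη
  obtain ⟨δ, hδ_pos, hδη⟩ : ∃ δ : ℝ, 0 < δ ∧ ENNReal.ofReal δ < η := by
    obtain ⟨r, -, hr0, hrη⟩ := ENNReal.lt_iff_exists_real_btwn.1 hη
    exact ⟨r, ENNReal.ofReal_pos.1 hr0, hrη⟩
  filter_upwards [ENNReal.tendsto_nhds_zero.1 (hb δ hδ_pos) (η - ENNReal.ofReal δ)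
    (tsub_pos_of_lt hδη)] with i hi
  calc a i ≤ ENNReal.ofReal δ + b δ i := hab δ hδ_pos i
    _ ≤ ENNReal.ofReal δ + (η - ENNReal.ofReal δ) := by gcongr
    _ = η := add_tsub_cancel_of_le hδη.le

theorem stmt_0_general
    (Ω : ℕ → Type*) [∀ n, MeasurableSpace (Ω n)]
    (P : ∀ n, Measure (Ω n)) [∀ n, IsProbabilityMeasure (P n)]
    (N : ℕ → ℕ)
    (F : ∀ n, ℕ → MeasurableSpace (Ω n))
    (hF_mono : ∀ n, Monotone (F n))
    (hF_le : ∀ n j, F n j ≤ (inferInstance : MeasurableSpace (Ω n)))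
    (X : ∀ n, ℕ → Ω n → ℝ)
    (hX_nonneg : ∀ n j ω, 0 ≤ X n j ω)
    (hX_int : ∀ n, ∀ j ∈ Finset.Icc 1 (N n), Integrable (X n j) (P n))
    (hS : ∀ ε > (0:ℝ), Tendsto
      (fun n => P n {ω | ε ≤ ∑ j ∈ Finset.Icc 1 (N n), ((P n)[X n j | F n (j - 1)]) ω})
      atTop (nhds 0)) :
    ∀ ε > (0:ℝ), Tendsto
      (fun n => P n {ω | ε ≤ ∑ j ∈ Finset.Icc 1 (N n), X n j ω})
      atTop (nhds 0) := by
  intro ε hε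
  refine ENNReal.tendsto_nhds_zero_of_le_ofReal_add (fun δ hδ => hS (ε * δ) (by positivity))
    fun δ hδ n => ?_
  have h := measure_le_sum_le_ofReal_div_add (hF_mono n) (hF_le n) (hX_nonneg n) (hX_int n) hε
    (mul_pos hε hδ).le
  rwa [mul_div_cancel_left₀ δ hε.ne'] at h

/-- If the sums of conditional expectations of nonnegative adapted variables tend to 0
in probability, then so do the sums of the variables themselves. -/
theorem stmt_0
    (Ω : ℕ → Type*) [∀ n, MeasurableSpace (Ω n)]
    (P : ∀ n, Measure (Ω n)) [∀ n, IsProbabilityMeasure (P n)]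
    (N : ℕ → ℕ)
    (F : ∀ n, ℕ → MeasurableSpace (Ω n))
    (hF_mono : ∀ n, Monotone (F n))
    (hF_le : ∀ n j, F n j ≤ (inferInstance : MeasurableSpace (Ω n)))
    (X : ∀ n, ℕ → Ω n → ℝ)
    (hX_nonneg : ∀ n j ω, 0 ≤ X n j ω)
    (hX_meas : ∀ n, ∀ j ∈ Finset.Icc 1 (N n), Measurable[F n j] (X n j))
    (hX_int : ∀ n, ∀ j ∈ Finset.Icc 1 (N n), Integrable (X n j) (P n))
    (hS : ∀ ε > (0:ℝ), Tendsto
      (fun n => P n {ω | ε ≤ ∑ j ∈ Finset.Icc 1 (N n), ((P n)[X n j | F n (j - 1)]) ω})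
      atTop (nhds 0)) :
    ∀ ε > (0:ℝ), Tendsto
      (fun n => P n {ω | ε ≤ ∑ j ∈ Finset.Icc 1 (N n), X n j ω})
      atTop (nhds 0) :=
  stmt_0_general Ω P N F hF_mono hF_le X hX_nonneg hX_int hS
end

section
/- Let (Ω, F, P) be a probability space with filtration (F_{n,j})_{j=0}^{N_n}, and let Y_{n,j} be square-integrable F_{n,j}-measurable random variables. If Σ_{j=1}^{N_n} E[(Y_{n,j} − E[Y_{n,j}|F_{n,j-1}])² | F_{n,j-1}] ≤ Σ_{j=1}^{N_n} E[Y_{n,j}² | F_{n,j-1}] almost surely, and the right-hand side converges to 0 in probability, then Σ_{j=1}^{N_n} (Y_{n,j} − E[Y_{n,j}|F_{n,j-1}]) → 0 in probability as n → ∞. -/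
/-!
Write `W j = Y j - E[Y j | ℱ (j-1)]` and `T j = ∑_{i ≤ j} E[Y i ^ 2 | ℱ (i-1)]`. Truncating the
differences by the predictable events `{T j ≤ δ}` keeps them martingale differences, so by
orthogonality of increments the second moment of the truncated sum is at most
`∑ E[1_{T j ≤ δ} E[Y j ^ 2 | ℱ (j-1)]] ≤ δ`. Chebyshev's inequality then gives the Lenglart-type
bound `P(ε ≤ |∑ W j|) ≤ P(δ ≤ T N) + δ / ε ^ 2`, and letting first `n → ∞`, then `δ → 0`
proves the theorem.
-/

open MeasureTheory Filter ProbabilityTheory Finset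

theorem sum_Icc_ite_partialSum_le {v : ℕ → ℝ} (hv : ∀ j, 0 ≤ v j) {δ : ℝ} (hδ : 0 ≤ δ) (N : ℕ) :
    ∑ j ∈ Icc 1 N, (if ∑ i ∈ Icc 1 j, v i ≤ δ then v j else 0) ≤ δ := by
  suffices h : ∑ j ∈ Icc 1 N, (if ∑ i ∈ Icc 1 j, v i ≤ δ then v j else 0)
      ≤ min (∑ i ∈ Icc 1 N, v i) δ from h.trans (min_le_right _ _)
  induction N with
  | zero => simp [hδ]
  | succ N ih =>
    have hsucc := sum_Icc_succ_top (Nat.le_add_left 1 N) v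
    rw [sum_Icc_succ_top (Nat.le_add_left 1 N), hsucc]
    have := min_le_left (∑ i ∈ Icc 1 N, v i) δ
    split_ifs with h
    · exact le_min (by linarith) (by linarith)
    · rw [add_zero]
      exact ih.trans (min_le_min_right _ (by linarith [hv (N + 1)]))

section

variable {Ω : Type*} {m0 : MeasurableSpace Ω} {μ : Measure Ω}

theorem integral_mul_eq_zero_of_condExp_eq_zero {m : MeasurableSpace Ω} (hm : m ≤ m0)
    [SigmaFinite (μ.trim hm)] {f g : Ω → ℝ} (hf : StronglyMeasurable[m] f)
    (hfg : Integrable (f * g) μ) (hg : Integrable g μ) (hg0 : μ[g | m] =ᵐ[μ] 0) :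
    ∫ ω, f ω * g ω ∂μ = 0 :=
  calc ∫ ω, f ω * g ω ∂μ = ∫ ω, (μ[f * g | m]) ω ∂μ := (integral_condExp hm).symm
    _ = ∫ ω, (f * μ[g | m]) ω ∂μ :=
      integral_congr_ae (condExp_mul_of_stronglyMeasurable_left hf hfg hg)
    _ = 0 := by
      have hzero : f * μ[g | m] =ᵐ[μ] 0 := hg0.mono fun ω hω => by simp [hω]
      exact (integral_congr_ae hzero).trans (by simp)

theorem integral_sq_sum_eq_sum_integral_sq_of_condExp_eq_zero [IsFiniteMeasure μ]
    (ℱ : Filtration ℕ m0) {Z : ℕ → Ω → ℝ} (N : ℕ)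
    (hZ_meas : ∀ j ∈ Icc 1 N, StronglyMeasurable[ℱ j] (Z j))
    (hZ_sq : ∀ j ∈ Icc 1 N, MemLp (Z j) 2 μ)
    (hZ_cond : ∀ j ∈ Icc 1 N, μ[Z j | ℱ (j - 1)] =ᵐ[μ] 0) :
    ∫ ω, (∑ j ∈ Icc 1 N, Z j ω) ^ 2 ∂μ = ∑ j ∈ Icc 1 N, ∫ ω, Z j ω ^ 2 ∂μ := by
  induction N with
  | zero => simp
  | succ N ih =>
    have hsub : Icc 1 N ⊆ Icc 1 (N + 1) := Icc_subset_Icc_right (Nat.le_succ N)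
    have hlast : N + 1 ∈ Icc 1 (N + 1) := right_mem_Icc.2 (Nat.le_add_left 1 N)
    set S := fun ω => ∑ j ∈ Icc 1 N, Z j ω
    have hS_sq : MemLp S 2 μ := memLp_finsetSum _ fun j hj => hZ_sq j (hsub hj)
    have hS_meas : StronglyMeasurable[ℱ N] S := Finset.stronglyMeasurable_fun_sum _ fun j hj =>
      (hZ_meas j (hsub hj)).mono (ℱ.mono (mem_Icc.1 hj).2)
    have hSZ : Integrable (S * Z (N + 1)) μ := hS_sq.integrable_mul (hZ_sq _ hlast)
    have horth : ∫ ω, S ω * Z (N + 1) ω ∂μ = 0 :=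
      integral_mul_eq_zero_of_condExp_eq_zero (ℱ.le N) hS_meas hSZ
        ((hZ_sq _ hlast).integrable one_le_two) (hZ_cond _ hlast)
    have hexpand : ∀ ω, (∑ j ∈ Icc 1 (N + 1), Z j ω) ^ 2
        = S ω ^ 2 + 2 * (S ω * Z (N + 1) ω) + Z (N + 1) ω ^ 2 := fun ω => by
      rw [sum_Icc_succ_top (Nat.le_add_left 1 N)]; ring
    have hS2 : Integrable (fun ω => S ω ^ 2) μ := hS_sq.integrable_sq
    have hcross : Integrable (fun ω => 2 * (S ω * Z (N + 1) ω)) μ := hSZ.const_mul 2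
    have hS2_cross : Integrable (fun ω => S ω ^ 2 + 2 * (S ω * Z (N + 1) ω)) μ := hS2.add hcross
    simp_rw [hexpand]
    rw [integral_add hS2_cross (hZ_sq _ hlast).integrable_sq, integral_add hS2 hcross,
      integral_const_mul, horth,
      ih (fun j hj => hZ_meas j (hsub hj)) (fun j hj => hZ_sq j (hsub hj))
        (fun j hj => hZ_cond j (hsub hj)), sum_Icc_succ_top (Nat.le_add_left 1 N)]
    ring

theorem measurableSet_sum_condExp_le (ℱ : Filtration ℕ m0) (f : ℕ → Ω → ℝ) (δ : ℝ) (j : ℕ) :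
    MeasurableSet[ℱ (j - 1)] {ω | ∑ i ∈ Icc 1 j, (μ[f i | ℱ (i - 1)]) ω ≤ δ} :=
  (Finset.stronglyMeasurable_fun_sum (Icc 1 j) (f := fun i => μ[f i | ℱ (i - 1)])
    fun _ hi => stronglyMeasurable_condExp.mono
    (ℱ.mono (Nat.sub_le_sub_right (mem_Icc.1 hi).2 1))).measurable measurableSet_Iic

variable [IsFiniteMeasure μ]

theorem condExp_indicator_sub_condExp_ae_eq_zero {m : MeasurableSpace Ω} (hm : m ≤ m0)
    {Y : Ω → ℝ} (hY : Integrable Y μ) {A : Set Ω} (hA : MeasurableSet[m] A) :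
    μ[A.indicator (Y - μ[Y | m]) | m] =ᵐ[μ] 0 := by
  have hself : μ[μ[Y | m] | m] = μ[Y | m] :=
    condExp_of_stronglyMeasurable hm stronglyMeasurable_condExp integrable_condExp
  filter_upwards [condExp_indicator (hY.sub integrable_condExp) hA,
    condExp_sub hY (integrable_condExp (m := m)) m] with ω hind hsub
  rw [hind, Pi.zero_apply, Set.indicator_apply_eq_zero, hsub, hself]
  exact fun _ => sub_self _

theorem integral_indicator_sub_condExp_sq_le {m : MeasurableSpace Ω} (hm : m ≤ m0) {Y : Ω → ℝ}
    (hY : MemLp Y 2 μ) {A : Set Ω} (hA : MeasurableSet[m] A) :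
    ∫ ω, (A.indicator (Y - μ[Y | m]) ω) ^ 2 ∂μ ≤ ∫ ω, A.indicator (μ[Y ^ 2 | m]) ω ∂μ := by
  have hsq : (fun ω => (A.indicator (Y - μ[Y | m]) ω) ^ 2) = A.indicator ((Y - μ[Y | m]) ^ 2) :=
    funext fun ω => by by_cases hω : ω ∈ A <;> simp [hω]
  rw [hsq, integral_indicator (hm A hA), integral_indicator (hm A hA)]
  calc ∫ ω in A, ((Y - μ[Y | m]) ^ 2) ω ∂μ = ∫ ω in A, (Var[Y; μ | m]) ω ∂μ :=
        (setIntegral_condVar (hm := hm) (hY.sub (hY.condExp one_le_two)).integrable_sq hA).symm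
    _ ≤ ∫ ω in A, (μ[Y ^ 2 | m]) ω ∂μ :=
        setIntegral_mono_ae integrable_condVar.integrableOn integrable_condExp.integrableOn
          (condVar_ae_le_condExp_sq hm hY)

theorem integral_sq_sum_indicator_sub_condExp_le (ℱ : Filtration ℕ m0) (Y : ℕ → Ω → ℝ) (N : ℕ)
    (hY_meas : ∀ j ∈ Icc 1 N, StronglyMeasurable[ℱ j] (Y j))
    (hY_sq : ∀ j ∈ Icc 1 N, MemLp (Y j) 2 μ) {A : ℕ → Set Ω}
    (hA : ∀ j, MeasurableSet[ℱ (j - 1)] (A j)) :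
    ∫ ω, (∑ j ∈ Icc 1 N, (A j).indicator (Y j - μ[Y j | ℱ (j - 1)]) ω) ^ 2 ∂μ
      ≤ ∑ j ∈ Icc 1 N, ∫ ω, (A j).indicator (μ[Y j ^ 2 | ℱ (j - 1)]) ω ∂μ := by
  have hpred : ∀ j, ℱ (j - 1) ≤ ℱ j := fun j => ℱ.mono (Nat.sub_le j 1)
  rw [integral_sq_sum_eq_sum_integral_sq_of_condExp_eq_zero ℱ N
    (fun j hj => ((hY_meas j hj).sub (stronglyMeasurable_condExp.mono (hpred j))).indicator
      (hpred j _ (hA j)))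
    (fun j hj => ((hY_sq j hj).sub ((hY_sq j hj).condExp one_le_two)).indicator
      (ℱ.le _ _ (hA j)))
    (fun j hj => condExp_indicator_sub_condExp_ae_eq_zero (ℱ.le _)
      ((hY_sq j hj).integrable one_le_two) (hA j))]
  exact sum_le_sum fun j hj => integral_indicator_sub_condExp_sq_le (ℱ.le _) (hY_sq j hj) (hA j)

theorem meas_abs_ge_le_integral_sq_div_sq {X : Ω → ℝ} (hX : MemLp X 2 μ) {ε : ℝ} (hε : 0 < ε) :
    μ {ω | ε ≤ |X ω|} ≤ ENNReal.ofReal ((∫ ω, X ω ^ 2 ∂μ) / ε ^ 2) := by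
  have hset : {ω | ε ≤ |X ω|} = {ω | ε ^ 2 ≤ X ω ^ 2} := by
    ext ω
    change ε ≤ |X ω| ↔ ε ^ 2 ≤ X ω ^ 2
    rw [← sq_abs (X ω)]
    exact (pow_le_pow_iff_left₀ hε.le (abs_nonneg _) two_ne_zero).symm
  rw [hset, ← ENNReal.ofReal_toReal (measure_ne_top μ _)]
  exact ENNReal.ofReal_le_ofReal ((le_div_iff₀' (by positivity)).2
    (mul_meas_ge_le_integral_of_nonneg (ae_of_all μ fun ω => sq_nonneg (X ω))
      hX.integrable_sq (ε ^ 2)))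

theorem integral_sq_sum_truncated_sub_condExp_le [IsProbabilityMeasure μ] (ℱ : Filtration ℕ m0)
    (Y : ℕ → Ω → ℝ) (N : ℕ) (hY_meas : ∀ j ∈ Icc 1 N, StronglyMeasurable[ℱ j] (Y j))
    (hY_sq : ∀ j ∈ Icc 1 N, MemLp (Y j) 2 μ) {δ : ℝ} (hδ : 0 ≤ δ) :
    ∫ ω, (∑ j ∈ Icc 1 N,
        {ω | ∑ i ∈ Icc 1 j, (μ[fun ω' => Y i ω' ^ 2 | ℱ (i - 1)]) ω ≤ δ}.indicator
          (Y j - μ[Y j | ℱ (j - 1)]) ω) ^ 2 ∂μ ≤ δ := by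
  set V : ℕ → Ω → ℝ := fun j => μ[fun ω' => Y j ω' ^ 2 | ℱ (j - 1)]
  set A : ℕ → Set Ω := fun j => {ω | ∑ i ∈ Icc 1 j, V i ω ≤ δ}
  have hA : ∀ j, MeasurableSet[ℱ (j - 1)] (A j) :=
    measurableSet_sum_condExp_le ℱ (fun i ω => Y i ω ^ 2) δ
  have hV_int : ∀ j, Integrable ((A j).indicator (V j)) μ := fun j =>
    integrable_condExp.indicator (ℱ.le _ _ (hA j))
  have hV_nonneg : ∀ᵐ ω ∂μ, ∀ j, 0 ≤ V j ω :=
    ae_all_iff.2 fun j => condExp_nonneg (ae_of_all _ fun ω => sq_nonneg (Y j ω))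
  calc _ ≤ ∑ j ∈ Icc 1 N, ∫ ω, (A j).indicator (V j) ω ∂μ :=
        integral_sq_sum_indicator_sub_condExp_le ℱ Y N hY_meas hY_sq hA
    _ = ∫ ω, ∑ j ∈ Icc 1 N, (A j).indicator (V j) ω ∂μ :=
        (integral_finsetSum _ fun j _ => hV_int j).symm
    _ ≤ ∫ _, δ ∂μ := by
        refine integral_mono_ae (integrable_finsetSum _ fun j _ => hV_int j) (integrable_const δ)
          (hV_nonneg.mono fun ω hω => ?_)
        simpa only [A, Set.indicator_apply, Set.mem_ofPred_eq] using
          sum_Icc_ite_partialSum_le hω hδ N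
    _ = δ := by simp

theorem meas_abs_sum_sub_condExp_ge_le [IsProbabilityMeasure μ] (ℱ : Filtration ℕ m0)
    (Y : ℕ → Ω → ℝ) (N : ℕ) (hY_meas : ∀ j ∈ Icc 1 N, StronglyMeasurable[ℱ j] (Y j))
    (hY_sq : ∀ j ∈ Icc 1 N, MemLp (Y j) 2 μ) {δ ε : ℝ} (hδ : 0 ≤ δ) (hε : 0 < ε) :
    μ {ω | ε ≤ |∑ j ∈ Icc 1 N, (Y j ω - (μ[Y j | ℱ (j - 1)]) ω)|}
      ≤ μ {ω | δ ≤ ∑ j ∈ Icc 1 N, (μ[fun ω' => Y j ω' ^ 2 | ℱ (j - 1)]) ω}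
        + ENNReal.ofReal (δ / ε ^ 2) := by
  set V : ℕ → Ω → ℝ := fun j => μ[fun ω' => Y j ω' ^ 2 | ℱ (j - 1)]
  set A : ℕ → Set Ω := fun j => {ω | ∑ i ∈ Icc 1 j, V i ω ≤ δ}
  set S : Ω → ℝ := fun ω => ∑ j ∈ Icc 1 N, (A j).indicator (Y j - μ[Y j | ℱ (j - 1)]) ω
  have hS_sq : MemLp S 2 μ := memLp_finsetSum _ fun j hj =>
    ((hY_sq j hj).sub ((hY_sq j hj).condExp one_le_two)).indicator
      (ℱ.le _ _ (measurableSet_sum_condExp_le ℱ (fun i ω => Y i ω ^ 2) δ j))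
  have hV_nonneg : ∀ᵐ ω ∂μ, ∀ j, 0 ≤ V j ω :=
    ae_all_iff.2 fun j => condExp_nonneg (ae_of_all _ fun ω => sq_nonneg (Y j ω))
  -- As `V ≥ 0` a.s., its partial sums increase, so off `{δ ≤ ∑ V}` nothing is truncated.
  have hincl : ({ω | ε ≤ |∑ j ∈ Icc 1 N, (Y j ω - (μ[Y j | ℱ (j - 1)]) ω)|} : Set Ω)
      ≤ᵐ[μ] ({ω | δ ≤ ∑ j ∈ Icc 1 N, V j ω} ∪ {ω | ε ≤ |S ω|} : Set Ω) := by
    filter_upwards [hV_nonneg] with ω hω hW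
    by_cases hTN : δ ≤ ∑ j ∈ Icc 1 N, V j ω
    · exact Or.inl hTN
    · have hmem : ∀ j ∈ Icc 1 N, ω ∈ A j := fun j hj =>
        (sum_le_sum_of_subset_of_nonneg (Icc_subset_Icc_right (mem_Icc.1 hj).2)
          fun i _ _ => hω i).trans (not_le.1 hTN).le
      refine Or.inr ?_
      change ε ≤ |∑ j ∈ Icc 1 N, (A j).indicator (Y j - μ[Y j | ℱ (j - 1)]) ω|
      rwa [sum_congr rfl fun j hj => Set.indicator_of_mem (hmem j hj) _]
  calc _ ≤ μ ({ω | δ ≤ ∑ j ∈ Icc 1 N, V j ω} ∪ {ω | ε ≤ |S ω|}) := measure_mono_ae hincl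
    _ ≤ μ {ω | δ ≤ ∑ j ∈ Icc 1 N, V j ω} + μ {ω | ε ≤ |S ω|} := measure_union_le _ _
    _ ≤ _ := by
      gcongr
      exact (meas_abs_ge_le_integral_sq_div_sq hS_sq hε).trans (ENNReal.ofReal_le_ofReal
        (by gcongr; exact integral_sq_sum_truncated_sub_condExp_le ℱ Y N hY_meas hY_sq hδ))

end

theorem stmt_10_general
    (Ω : ℕ → Type*) [∀ n, MeasurableSpace (Ω n)]
    (P : ∀ n, Measure (Ω n)) [∀ n, IsProbabilityMeasure (P n)]
    (N : ℕ → ℕ)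
    (F : ∀ n, ℕ → MeasurableSpace (Ω n))
    (hF_mono : ∀ n, Monotone (F n))
    (hF_le : ∀ n j, F n j ≤ (inferInstance : MeasurableSpace (Ω n)))
    (Y : ∀ n, ℕ → Ω n → ℝ)
    (hY_meas : ∀ n, ∀ j ∈ Finset.Icc 1 (N n), Measurable[F n j] (Y n j))
    (hY_sq : ∀ n, ∀ j ∈ Finset.Icc 1 (N n), MemLp (Y n j) 2 (P n))
    (hconv : ∀ ε > (0:ℝ), Tendsto
      (fun n => P n {ω | ε ≤ ∑ j ∈ Finset.Icc 1 (N n),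
        ((P n)[fun ω' => (Y n j ω') ^ 2 | F n (j - 1)]) ω})
      atTop (nhds 0)) :
    ∀ ε > (0:ℝ), Tendsto
      (fun n => P n {ω | ε ≤
        |∑ j ∈ Finset.Icc 1 (N n), (Y n j ω - ((P n)[Y n j | F n (j - 1)]) ω)|})
      atTop (nhds 0) := by
  intro ε hε
  refine ENNReal.tendsto_nhds_zero.2 fun η hη => ?_
  obtain ⟨r, -, hr_pos, hr_lt⟩ := ENNReal.lt_iff_exists_real_btwn.1 (ENNReal.half_pos hη.ne')
  have hδ : 0 < r * ε ^ 2 := mul_pos (ENNReal.ofReal_pos.1 hr_pos) (pow_pos hε 2)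
  filter_upwards [ENNReal.tendsto_nhds_zero.1 (hconv _ hδ) _ (ENNReal.half_pos hη.ne')] with n hn
  calc _ ≤ _ := meas_abs_sum_sub_condExp_ge_le ⟨F n, hF_mono n, hF_le n⟩ (Y n) (N n)
        (fun j hj => (hY_meas n j hj).stronglyMeasurable) (hY_sq n) hδ.le hε
    _ ≤ η / 2 + η / 2 := by
      gcongr
      rw [mul_div_cancel_right₀ r (pow_ne_zero 2 hε.ne')]
      exact hr_lt.le
    _ = η := ENNReal.add_halves η

/-- Martingale-difference array law of large numbers: if the sums of conditional second
moments tend to 0 in probability, then the centered sums tend to 0 in probability. -/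
theorem stmt_10
    (Ω : ℕ → Type*) [∀ n, MeasurableSpace (Ω n)]
    (P : ∀ n, Measure (Ω n)) [∀ n, IsProbabilityMeasure (P n)]
    (N : ℕ → ℕ)
    (F : ∀ n, ℕ → MeasurableSpace (Ω n))
    (hF_mono : ∀ n, Monotone (F n))
    (hF_le : ∀ n j, F n j ≤ (inferInstance : MeasurableSpace (Ω n)))
    (Y : ∀ n, ℕ → Ω n → ℝ)
    (hY_meas : ∀ n, ∀ j ∈ Finset.Icc 1 (N n), Measurable[F n j] (Y n j))
    (hY_sq : ∀ n, ∀ j ∈ Finset.Icc 1 (N n), MemLp (Y n j) 2 (P n))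
    (hbound : ∀ n, ∀ᵐ ω ∂(P n),
      ∑ j ∈ Finset.Icc 1 (N n),
          ((P n)[fun ω' => (Y n j ω' - ((P n)[Y n j | F n (j - 1)]) ω') ^ 2 | F n (j - 1)]) ω
        ≤ ∑ j ∈ Finset.Icc 1 (N n), ((P n)[fun ω' => (Y n j ω') ^ 2 | F n (j - 1)]) ω)
    (hconv : ∀ ε > (0:ℝ), Tendsto
      (fun n => P n {ω | ε ≤ ∑ j ∈ Finset.Icc 1 (N n),
        ((P n)[fun ω' => (Y n j ω') ^ 2 | F n (j - 1)]) ω})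
      atTop (nhds 0)) :
    ∀ ε > (0:ℝ), Tendsto
      (fun n => P n {ω | ε ≤
        |∑ j ∈ Finset.Icc 1 (N n), (Y n j ω - ((P n)[Y n j | F n (j - 1)]) ω)|})
      atTop (nhds 0) :=
  stmt_10_general Ω P N F hF_mono hF_le Y hY_meas hY_sq hconv
end
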